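/- As ε → 0 with N = 1/ε and r_ε = ε^{1/3}, the functions N 1_{B(0,r_ε)} form an approximation of (4π/3)δ₀: for any finite measures ρ_N converging weakly to a measure with continuous density ρ, and G continuous bounded, N 1_{B(0,r_ε)} * (G ρ_N) converges weakly in the sense of measures to (4π/3) ρ G; moreover the convolutions are uniformly bounded in L^∞ by ‖G‖_∞ (using that the x_k supporting ρ_N are 2r_ε-separated). -/

import Mathlib

open MeasureTheory Real Filter Topology

abbrev E3 := EuclideanSpace ℝ (Fin 3)

/-- The convolution `N 1_{B(0,r_ε)} * (G ρ_N)(y) = Σ_k G(x_k) 1_{B(x_k,r_ε)}(y)`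
where `ρ_N = (1/N) Σ_k δ_{x_k}` and `N r_ε³ = 1`. -/
noncomputable def convFun (N : ℕ) (x : Fin N → E3) (rε : ℝ) (G : E3 → ℝ) (y : E3) : ℝ :=
  ∑ k, Set.indicator (Metric.closedBall (x k) rε) (fun _ => G (x k)) y

lemma gamma52 : Real.Gamma ((3:ℝ) / 2 + 1) = 3/4 * Real.sqrt π := by
  rw [Real.Gamma_add_one (by norm_num)]
  have h32 : (3:ℝ)/2 = 1/2 + 1 := by norm_num
  rw [h32, Real.Gamma_add_one (by norm_num), Real.Gamma_one_half_eq]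
  ring

lemma vol3 (c : E3) (r : ℝ) (hr : 0 ≤ r) :
    (volume (Metric.closedBall c r)).toReal = 4 * π / 3 * r ^ 3 := by
  rw [EuclideanSpace.volume_closedBall]
  have hcard : Fintype.card (Fin 3) = 3 := by simp
  rw [hcard]
  have hπ : (0:ℝ) ≤ π := Real.pi_nonneg
  have hcast : ((3:ℕ):ℝ) / 2 + 1 = (3:ℝ)/2 + 1 := by norm_num
  have hconst : Real.sqrt π ^ 3 / Real.Gamma (((3:ℕ):ℝ) / 2 + 1) = 4 * π / 3 := by
    rw [hcast, gamma52]
    have hs : Real.sqrt π ^ 3 = π * Real.sqrt π := by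
      rw [pow_succ, Real.sq_sqrt hπ]
    rw [hs, div_eq_iff (by positivity)]
    ring
  rw [hconst]
  rw [ENNReal.toReal_mul, ENNReal.toReal_pow, ENNReal.toReal_ofReal hr,
    ENNReal.toReal_ofReal (by positivity)]
  ring

lemma rcube (N : ℕ) : ((N:ℝ) ^ (-(1:ℝ)/3)) ^ (3:ℕ) = (N:ℝ)⁻¹ := by
  rw [← Real.rpow_natCast ((N:ℝ) ^ (-(1:ℝ)/3)) 3, ← Real.rpow_mul (Nat.cast_nonneg N),
    show (-(1:ℝ)/3 * (3:ℕ) : ℝ) = -1 by norm_num, Real.rpow_neg_one]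

lemma integral_conv (N : ℕ) (x : Fin N → E3) (r : ℝ) (G φ : E3 → ℝ)
    (hφ : Continuous φ) :
    ∫ y, φ y * convFun N x r G y
      = ∑ k, G (x k) * ∫ y in Metric.closedBall (x k) r, φ y := by
  have h1 : ∀ y, φ y * convFun N x r G y
      = ∑ k, Set.indicator (Metric.closedBall (x k) r) (fun y => φ y * G (x k)) y := by
    intro y
    unfold convFun
    rw [Finset.mul_sum]
    refine Finset.sum_congr rfl fun k _ => ?_
    rw [Set.indicator_mul_right]
  simp_rw [h1]
  rw [integral_finset_sum _ (fun k _ => ?_)]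
  · refine Finset.sum_congr rfl fun k _ => ?_
    rw [integral_indicator measurableSet_closedBall, integral_mul_const, mul_comm]
  · exact (((hφ.mul continuous_const).continuousOn).integrableOn_compact
      (isCompact_closedBall _ _)).integrable_indicator measurableSet_closedBall

lemma conv_bound (N : ℕ) (x : Fin N → E3) (r : ℝ)
    (hsep : ∀ k l : Fin N, k ≠ l → 2 * r < dist (x k) (x l))
    (G : E3 → ℝ) (Cg : ℝ) (hG : ∀ y, |G y| ≤ Cg) (y : E3) :
    |convFun N x r G y| ≤ Cg := by
  have hCg : 0 ≤ Cg := le_trans (abs_nonneg _) (hG 0)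
  by_cases h : ∃ k, y ∈ Metric.closedBall (x k) r
  · obtain ⟨k₀, hk₀⟩ := h
    have hsum : convFun N x r G y = G (x k₀) := by
      unfold convFun
      rw [Finset.sum_eq_single k₀]
      · exact Set.indicator_of_mem hk₀ _
      · intro l _ hl
        apply Set.indicator_of_notMem
        intro hyl
        have := hsep k₀ l (fun h => hl (h.symm ▸ rfl))
        have h1 : dist (x k₀) (x l) ≤ dist (x k₀) y + dist y (x l) := dist_triangle _ _ _
        rw [Metric.mem_closedBall] at hk₀ hyl
        rw [dist_comm (x k₀) y] at h1
        linarith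
      · intro h; exact absurd (Finset.mem_univ k₀) h
    rw [hsum]; exact hG _
  · push_neg at h
    have hsum : convFun N x r G y = 0 :=
      Finset.sum_eq_zero fun k _ => Set.indicator_of_notMem (h k) _
    rw [hsum, abs_zero]; exact hCg

set_option maxHeartbeats 2000000 in
/-- as `ε → 0` with `N = 1/ε`, `r_ε = ε^{1/3} = N^{−1/3}`, the functions
`N 1_{B(0,r_ε)}` form an approximation of `(4π/3)δ₀`: if the empirical measures
`ρ_N = (1/N)Σ_k δ_{x_k}` (supported on `2r_ε`-separated points) converge weakly to a
measure with continuous bounded density `ρ`, and `G` is continuous and bounded, then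
`N 1_{B(0,r_ε)} * (G ρ_N)` converges weakly in the sense of measures to `(4π/3) ρ G`,
and the convolutions are uniformly bounded in `L^∞` by `‖G‖_∞`. -/
theorem stmt15 (x : (N : ℕ) → Fin N → E3)
    (hsep : ∀ N : ℕ, ∀ k l : Fin N, k ≠ l →
      2 * ((N : ℝ) ^ (-(1:ℝ)/3)) < dist (x N k) (x N l))
    (ρ : E3 → ℝ) (hρcont : Continuous ρ) (Cρ : ℝ) (hρbdd : ∀ y, |ρ y| ≤ Cρ)
    (G : E3 → ℝ) (hGcont : Continuous G) (Cg : ℝ) (hGbdd : ∀ y, |G y| ≤ Cg)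
    (hweak : ∀ φ : E3 → ℝ, Continuous φ → (∃ M, ∀ y, |φ y| ≤ M) →
      Tendsto (fun N : ℕ => (N : ℝ)⁻¹ * ∑ k, φ (x N k)) atTop
        (𝓝 (∫ y, φ y * ρ y))) :
    (∀ φ : E3 → ℝ, Continuous φ → (∃ M, ∀ y, |φ y| ≤ M) →
      Tendsto (fun N : ℕ =>
          ∫ y, φ y * convFun N (x N) ((N : ℝ) ^ (-(1:ℝ)/3)) G y) atTop
        (𝓝 (4 * π / 3 * ∫ y, φ y * ρ y * G y))) ∧
    (∀ N : ℕ, ∀ y : E3, |convFun N (x N) ((N : ℝ) ^ (-(1:ℝ)/3)) G y| ≤ Cg) := by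
  have hCg : 0 ≤ Cg := le_trans (abs_nonneg _) (hGbdd 0)
  have hπ : (0:ℝ) < π := Real.pi_pos
  set r : ℕ → ℝ := fun N => (N:ℝ) ^ (-(1:ℝ)/3) with hr_def
  have hr0 : ∀ N, 0 ≤ r N := fun N => Real.rpow_nonneg (Nat.cast_nonneg N) _
  -- integrability of ρ and total mass 1
  have hρ_one : ∫ y, ρ y = 1 := by
    have h1 := hweak (fun _ => (1:ℝ)) continuous_const ⟨1, fun y => by norm_num⟩
    have h2 : Tendsto (fun N : ℕ => (N : ℝ)⁻¹ * ∑ _k : Fin N, (1:ℝ)) atTop (𝓝 1) := by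
      apply Tendsto.congr' _ tendsto_const_nhds
      filter_upwards [eventually_ge_atTop 1] with N hN
      have : (N:ℝ) ≠ 0 := Nat.cast_ne_zero.2 (by omega)
      simp [this]
    have := tendsto_nhds_unique h1 h2
    simpa using this
  have hρint : Integrable ρ := by
    by_contra h
    rw [integral_undef h] at hρ_one
    norm_num at hρ_one
  constructor
  · -- weak convergence part
    intro φ hφ hφbdd
    obtain ⟨M₀, hM₀⟩ := hφbdd
    set Mφ := max M₀ 0 with hMφ_def
    have hMφ : ∀ y, |φ y| ≤ Mφ := fun y => le_trans (hM₀ y) (le_max_left _ _)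
    have hMφ0 : 0 ≤ Mφ := le_max_right _ _
    -- the main term
    have hmain : Tendsto (fun N : ℕ =>
        4 * π / 3 * ((N : ℝ)⁻¹ * ∑ k, (φ (x N k) * G (x N k)))) atTop
        (𝓝 (4 * π / 3 * ∫ y, φ y * ρ y * G y)) := by
      have h1 := hweak (fun y => φ y * G y) (hφ.mul hGcont)
        ⟨Mφ * Cg, fun y => by
          rw [abs_mul]
          exact mul_le_mul (hMφ y) (hGbdd y) (abs_nonneg _) hMφ0⟩
      have h2 : (∫ y, (φ y * G y) * ρ y) = ∫ y, φ y * ρ y * G y := by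
        congr 1; funext y; ring
      rw [h2] at h1
      exact h1.const_mul _
    -- the error term
    have herr : Tendsto (fun N : ℕ =>
        (∫ y, φ y * convFun N (x N) (r N) G y)
          - 4 * π / 3 * ((N : ℝ)⁻¹ * ∑ k, (φ (x N k) * G (x N k)))) atTop (𝓝 0) := by
      rw [NormedAddCommGroup.tendsto_nhds_zero]
      intro ε hε
      have hA0 : (0:ℝ) < 4 * π / 3 + 1 := by positivity
      set A : ℝ := 4 * π / 3 + 1 with hA_def
      set εu : ℝ := ε / (2 * (Cg + 1) * A) with hεu_def
      have hεu0 : 0 < εu := by rw [hεu_def]; positivity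
      set σ : ℝ := ε / (2 * (Cg + 1) * A * (2 * Mφ + 1)) with hσ_def
      have hσ0 : 0 < σ := by rw [hσ_def]; positivity
      -- cutoff functions
      set ψ : ℝ → E3 → ℝ := fun R y => min 1 (max 0 (‖y‖ - R)) with hψ_def
      have hψcont : ∀ R, Continuous (ψ R) := fun R =>
        continuous_const.min (continuous_const.max (continuous_norm.sub continuous_const))
      have hψ0 : ∀ R y, 0 ≤ ψ R y := fun R y => le_min (by norm_num) (le_max_left _ _)
      have hψle1 : ∀ R y, ψ R y ≤ 1 := fun R y => min_le_left _ _
      -- choose R with ∫ ψ R ρ small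
      have hψρ : Tendsto (fun n : ℕ => ∫ y, ψ n y * ρ y) atTop (𝓝 0) := by
        have h0 : (𝓝 (0:ℝ)) = 𝓝 (∫ (_ : E3), (0:ℝ)) := by simp
        rw [h0]
        apply tendsto_integral_of_dominated_convergence (fun y => |ρ y|)
        · intro n; exact ((hψcont n).mul hρcont).aestronglyMeasurable
        · exact hρint.abs
        · intro n
          filter_upwards with y
          rw [Real.norm_eq_abs, abs_mul]
          have h1 : |ψ (n:ℝ) y| ≤ 1 :=
            abs_le.2 ⟨le_trans (by norm_num) (hψ0 (n:ℝ) y), hψle1 (n:ℝ) y⟩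
          calc |ψ (n:ℝ) y| * |ρ y| ≤ 1 * |ρ y| :=
                mul_le_mul_of_nonneg_right h1 (abs_nonneg _)
            _ = |ρ y| := one_mul _
        · filter_upwards with y
          apply Tendsto.congr' _ tendsto_const_nhds
          filter_upwards [eventually_ge_atTop ⌈‖y‖⌉₊] with n hn
          have h1 : ‖y‖ - (n:ℝ) ≤ 0 := by
            have h2 : ((⌈‖y‖⌉₊ : ℕ) : ℝ) ≤ (n:ℝ) := Nat.cast_le.2 hn
            linarith [Nat.le_ceil ‖y‖]
          have hz : ψ (n:ℝ) y = 0 := by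
            rw [hψ_def]; simp only [max_eq_left h1]; norm_num
          rw [hz, zero_mul]
      obtain ⟨n₀, hn₀⟩ := (Metric.tendsto_atTop.1 hψρ) (σ/2) (by positivity)
      have hsmall : |∫ y, ψ (n₀:ℝ) y * ρ y| < σ/2 := by
        have := hn₀ n₀ le_rfl; rwa [Real.dist_eq, sub_zero] at this
      set R : ℝ := (n₀ : ℝ) with hR_def
      have hR0 : (0:ℝ) ≤ R := Nat.cast_nonneg _
      -- uniform continuity of φ on closedBall 0 (R+2)
      obtain ⟨δ, hδ0, hδ⟩ := Metric.uniformContinuousOn_iff.1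
        ((isCompact_closedBall (0:E3) (R+2)).uniformContinuousOn_of_continuous
          hφ.continuousOn) εu hεu0
      -- convergence of the ψ-averages
      have hS := hweak (ψ R) (hψcont R)
        ⟨1, fun y => abs_le.2 ⟨le_trans (by norm_num) (hψ0 R y), hψle1 R y⟩⟩
      have hSev : ∀ᶠ N : ℕ in atTop, (N:ℝ)⁻¹ * ∑ k, ψ R (x N k) < σ := by
        obtain ⟨N₁, hN₁⟩ := (Metric.tendsto_atTop.1 hS) (σ/2) (by positivity)
        filter_upwards [eventually_ge_atTop N₁] with N hN
        have h2 := hN₁ N hN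
        rw [Real.dist_eq] at h2
        have h3 := abs_lt.1 h2
        have h4 := abs_lt.1 hsmall
        linarith [h3.2, h4.2]
      -- smallness of the radius
      have hrlim : Tendsto (fun N : ℕ => r N) atTop (𝓝 0) := by
        have := (tendsto_rpow_neg_atTop (y := (1:ℝ)/3) (by norm_num)).comp
          (tendsto_natCast_atTop_atTop (R := ℝ))
        simpa [hr_def, Function.comp_def, neg_div] using this
      have hrδev : ∀ᶠ N : ℕ in atTop, r N < δ := by
        obtain ⟨N₂, hN₂⟩ := (Metric.tendsto_atTop.1 hrlim) δ hδ0
        filter_upwards [eventually_ge_atTop N₂] with N hN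
        have := hN₂ N hN
        rw [Real.dist_eq, sub_zero] at this
        exact lt_of_le_of_lt (le_abs_self _) this
      filter_upwards [hSev, hrδev, eventually_ge_atTop 1] with N hSN hrδN hN1
      have hNpos : (0:ℝ) < (N:ℝ) := by exact_mod_cast Nat.pos_of_ne_zero (by omega)
      have hr1 : r N ≤ 1 :=
        Real.rpow_le_one_of_one_le_of_nonpos (by exact_mod_cast hN1) (by norm_num)
      set vol : ℝ := 4 * π / 3 * (N:ℝ)⁻¹ with hvol_def
      have hvol : ∀ c : E3, (volume (Metric.closedBall c (r N))).toReal = vol := by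
        intro c; rw [vol3 c _ (hr0 N), hvol_def]
        congr 1
        exact rcube N
      have hint : ∀ k : Fin N, IntegrableOn φ (Metric.closedBall (x N k) (r N)) :=
        fun k => hφ.continuousOn.integrableOn_compact (isCompact_closedBall _ _)
      have hsub : ∀ k : Fin N,
          ∫ y in Metric.closedBall (x N k) (r N), (φ y - φ (x N k))
            = (∫ y in Metric.closedBall (x N k) (r N), φ y) - vol * φ (x N k) := by
        intro k
        rw [integral_sub (hint k)
          (integrableOn_const measure_closedBall_lt_top.ne),
          setIntegral_const, measureReal_def, hvol, smul_eq_mul]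
      -- rewrite the difference as a sum
      have hdiffEq : (∫ y, φ y * convFun N (x N) (r N) G y)
            - 4 * π / 3 * ((N : ℝ)⁻¹ * ∑ k, (φ (x N k) * G (x N k)))
          = ∑ k, G (x N k) * ∫ y in Metric.closedBall (x N k) (r N), (φ y - φ (x N k)) := by
        rw [integral_conv N (x N) (r N) G φ hφ]
        have hmainEq : 4 * π / 3 * ((N : ℝ)⁻¹ * ∑ k, (φ (x N k) * G (x N k)))
            = ∑ k : Fin N, G (x N k) * (vol * φ (x N k)) := by
          rw [Finset.mul_sum, Finset.mul_sum]
          exact Finset.sum_congr rfl fun k _ => by rw [hvol_def]; ring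
        rw [hmainEq, ← Finset.sum_sub_distrib]
        refine Finset.sum_congr rfl fun k _ => ?_
        rw [hsub k]
        ring
      rw [hdiffEq, Real.norm_eq_abs]
      -- per-ball estimate
      have hterm : ∀ k : Fin N,
          |G (x N k) * ∫ y in Metric.closedBall (x N k) (r N), (φ y - φ (x N k))|
            ≤ Cg * ((εu + 2 * Mφ * ψ R (x N k)) * vol) := by
        intro k
        have hψnn : 0 ≤ ψ R (x N k) := hψ0 R _
        have hbound : ∀ y ∈ Metric.closedBall (x N k) (r N),
            ‖φ y - φ (x N k)‖ ≤ εu + 2 * Mφ * ψ R (x N k) := by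
          intro y hy
          rw [Real.norm_eq_abs]
          by_cases hx : ‖x N k‖ ≤ R + 1
          · have hdy : dist y (x N k) ≤ r N := Metric.mem_closedBall.1 hy
            have hy2 : y ∈ Metric.closedBall (0:E3) (R+2) := by
              rw [Metric.mem_closedBall, dist_zero_right]
              have h5 : ‖y‖ ≤ dist y (x N k) + ‖x N k‖ := by
                calc ‖y‖ = dist y 0 := (dist_zero_right y).symm
                  _ ≤ dist y (x N k) + dist (x N k) 0 := dist_triangle _ _ _
                  _ = dist y (x N k) + ‖x N k‖ := by rw [dist_zero_right]
              linarith
            have hx2 : x N k ∈ Metric.closedBall (0:E3) (R+2) := by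
              rw [Metric.mem_closedBall, dist_zero_right]; linarith
            have h6 := hδ y hy2 (x N k) hx2 (lt_of_le_of_lt hdy hrδN)
            rw [Real.dist_eq] at h6
            nlinarith
          · push_neg at hx
            have hψeq : ψ R (x N k) = 1 := by
              rw [hψ_def]
              simp only []
              rw [max_eq_right (by linarith : (0:ℝ) ≤ ‖x N k‖ - R),
                min_eq_left (by linarith : (1:ℝ) ≤ ‖x N k‖ - R)]
            rw [hψeq]
            have h7 : |φ y - φ (x N k)| ≤ |φ y| + |φ (x N k)| := abs_sub _ _
            linarith [hMφ y, hMφ (x N k)]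
        have hIb : |∫ y in Metric.closedBall (x N k) (r N), (φ y - φ (x N k))|
            ≤ (εu + 2 * Mφ * ψ R (x N k)) * vol := by
          have h8 := norm_setIntegral_le_of_norm_le_const (μ := volume)
            measure_closedBall_lt_top hbound
          rw [measureReal_def, hvol] at h8
          exact h8
        rw [abs_mul]
        exact mul_le_mul (hGbdd _) hIb (abs_nonneg _) hCg
      have hS0 : 0 ≤ (N:ℝ)⁻¹ * ∑ k, ψ R (x N k) :=
        mul_nonneg (inv_nonneg.2 hNpos.le) (Finset.sum_nonneg fun k _ => hψ0 R _)
      have hCgA : Cg * (4*π/3) ≤ (Cg+1) * A := by rw [hA_def]; nlinarith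
      have hCgA0 : (0:ℝ) < (Cg+1) * A := by positivity
      have hCg1 : (Cg + 1) ≠ 0 := by positivity
      have hAne : A ≠ 0 := by positivity
      have hM1 : (2*Mφ+1) ≠ 0 := by positivity
      have h1 : (Cg+1) * A * εu = ε/2 := by
        rw [hεu_def]; field_simp
      have hσεu : (2*Mφ+1) * σ = εu := by
        rw [hσ_def, hεu_def]; field_simp
      calc |∑ k, G (x N k) * ∫ y in Metric.closedBall (x N k) (r N), (φ y - φ (x N k))|
          ≤ ∑ k, |G (x N k) * ∫ y in Metric.closedBall (x N k) (r N), (φ y - φ (x N k))| :=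
            Finset.abs_sum_le_sum_abs _ _
        _ ≤ ∑ k, Cg * ((εu + 2 * Mφ * ψ R (x N k)) * vol) :=
            Finset.sum_le_sum fun k _ => hterm k
        _ = ∑ k, (Cg * vol * εu + (Cg * vol * (2 * Mφ)) * ψ R (x N k)) :=
            Finset.sum_congr rfl fun k _ => by ring
        _ = (N:ℝ) * (Cg * vol * εu) + Cg * vol * (2 * Mφ) * ∑ k, ψ R (x N k) := by
            rw [Finset.sum_add_distrib, Finset.sum_const, ← Finset.mul_sum]
            simp [Finset.card_univ, nsmul_eq_mul]
        _ = Cg * (4*π/3) * (εu + 2 * Mφ * ((N:ℝ)⁻¹ * ∑ k, ψ R (x N k))) := by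
            rw [hvol_def]; field_simp
        _ ≤ (Cg+1) * A * (εu + 2 * Mφ * ((N:ℝ)⁻¹ * ∑ k, ψ R (x N k))) := by
            apply mul_le_mul_of_nonneg_right hCgA
            have h9 : 0 ≤ 2 * Mφ * ((N:ℝ)⁻¹ * ∑ k, ψ R (x N k)) :=
              mul_nonneg (by linarith) hS0
            linarith
        _ = (Cg+1) * A * εu + (Cg+1) * A * (2 * Mφ * ((N:ℝ)⁻¹ * ∑ k, ψ R (x N k))) := by
            ring
        _ < ε/2 + ε/2 := by
            apply add_lt_add_of_le_of_lt (le_of_eq h1)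
            have h2 : 2 * Mφ * ((N:ℝ)⁻¹ * ∑ k, ψ R (x N k)) < εu := by
              have h10 : 2 * Mφ * ((N:ℝ)⁻¹ * ∑ k, ψ R (x N k)) ≤ 2 * Mφ * σ :=
                mul_le_mul_of_nonneg_left hSN.le (by linarith)
              linarith
            calc (Cg+1) * A * (2 * Mφ * ((N:ℝ)⁻¹ * ∑ k, ψ R (x N k)))
                < (Cg+1) * A * εu := mul_lt_mul_of_pos_left h2 hCgA0
              _ = ε/2 := h1
        _ = ε := by ring
    have := hmain.add herr
    rw [add_zero] at this
    apply this.congr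
    intro N
    ring
  · intro N y
    exact conv_bound N (x N) _ (hsep N) G Cg hGbdd y
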